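/- arXiv:1011.4572 — 2 statements merged into one kernel-verified Lean document; each statement's English description precedes it below -/
import Mathlib

section
/- Let G be a triangle-free connected graph with diameter 3 whose complement is connected. Then rc(complement of G) ≤ 5. -/
open SimpleGraph

/-- A graph `G` is rainbow connected under edge-coloring `c` if any two vertices are
joined by a path whose edges receive pairwise distinct colors. -/
def RainbowConnected {V : Type*} (G : SimpleGraph V) (c : Sym2 V → ℕ) : Prop :=
  ∀ u v : V, ∃ p : G.Walk u v, p.IsPath ∧ (p.edges.map c).Nodup

/-- The rainbow connection number: the least number of colors in an edge-coloring
making `G` rainbow connected. -/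
noncomputable def rc {V : Type*} [Fintype V] (G : SimpleGraph V) : ℕ :=
  sInf {n | ∃ c : Sym2 V → ℕ, (∀ e ∈ G.edgeSet, c e < n) ∧ RainbowConnected G c}

/-- Least `n` with `n ^ s ≥ t`, i.e. `⌈t^(1/s)⌉`. -/
noncomputable def ceilRoot (s t : ℕ) : ℕ := sInf {n | t ≤ n ^ s}

open scoped Classical in
/-- The 5-coloring used for `Gᶜ`: edge `xy` gets `4`, edges at `x` get `3` or `0`
according to whether the other end is a neighbor of `y`, edges at `y` get `2` or `1`
according to whether the other end is a neighbor of `x`, everything else `0`. -/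
noncomputable def rcCol {V : Type*} (G : SimpleGraph V) (x y : V) : Sym2 V → ℕ :=
  fun e =>
    if e = s(x, y) then 4
    else if x ∈ e then (if ∃ z ∈ e, G.Adj y z then 3 else 0)
    else if y ∈ e then (if ∃ z ∈ e, G.Adj x z then 2 else 1)
    else 0

lemma rcCol_lt {V : Type*} (G : SimpleGraph V) (x y : V) (e : Sym2 V) :
    rcCol G x y e < 5 := by
  unfold rcCol; split_ifs <;> omega

lemma rcCol_xy {V : Type*} (G : SimpleGraph V) (x y : V) :
    rcCol G x y s(x, y) = 4 := by
  simp [rcCol]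

open scoped Classical in
lemma rcCol_x {V : Type*} (G : SimpleGraph V) {x y z : V} (hzx : z ≠ x) (hzy : z ≠ y)
    (hnadj : ¬ G.Adj x y) :
    rcCol G x y s(x, z) = if G.Adj y z then 3 else 0 := by
  unfold rcCol
  rw [if_neg, if_pos (Sym2.mem_mk_left x z)]
  · have h : (∃ w ∈ s(x, z), G.Adj y w) ↔ G.Adj y z := by
      constructor
      · rintro ⟨w, hw, hadj⟩
        rcases Sym2.mem_iff.mp hw with rfl | rfl
        · exact absurd hadj.symm hnadj
        · exact hadj
      · intro h; exact ⟨z, Sym2.mem_mk_right x z, h⟩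
    simp only [h]
  · intro h
    rcases Sym2.eq_iff.mp h with ⟨-, h2⟩ | ⟨h1, h2⟩
    · exact hzy h2
    · exact hzx h2

open scoped Classical in
lemma rcCol_y {V : Type*} (G : SimpleGraph V) {x y z : V} (hxy : x ≠ y) (hzx : z ≠ x)
    (hzy : z ≠ y) (hnadj : ¬ G.Adj x y) :
    rcCol G x y s(y, z) = if G.Adj x z then 2 else 1 := by
  unfold rcCol
  rw [if_neg, if_neg, if_pos (Sym2.mem_mk_left y z)]
  · have h : (∃ w ∈ s(y, z), G.Adj x w) ↔ G.Adj x z := by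
      constructor
      · rintro ⟨w, hw, hadj⟩
        rcases Sym2.mem_iff.mp hw with rfl | rfl
        · exact absurd hadj hnadj
        · exact hadj
      · intro h; exact ⟨z, Sym2.mem_mk_right y z, h⟩
    simp only [h]
  · -- x ∉ s(y, z)
    rw [Sym2.mem_iff]
    push_neg
    exact ⟨hxy, fun h => hzx h.symm⟩
  · intro h
    rcases Sym2.eq_iff.mp h with ⟨h1, -⟩ | ⟨-, h2⟩
    · exact hxy h1.symm
    · exact hzx h2

section Walks

variable {V : Type*} {H : SimpleGraph V} {c : Sym2 V → ℕ}

lemma rw_one {a b : V} (h : H.Adj a b) :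
    ∃ p : H.Walk a b, p.IsPath ∧ (p.edges.map c).Nodup :=
  ⟨Walk.cons h Walk.nil, by simp [Walk.isPath_def, h.ne], by simp⟩

lemma rw_two {a b d : V} (h1 : H.Adj a b) (h2 : H.Adj b d) (had : a ≠ d)
    (hc : c s(a, b) ≠ c s(b, d)) :
    ∃ p : H.Walk a d, p.IsPath ∧ (p.edges.map c).Nodup :=
  ⟨Walk.cons h1 (Walk.cons h2 Walk.nil),
    by simp [Walk.isPath_def, h1.ne, h2.ne, had],
    by simp [hc]⟩

lemma rw_three {a b d e : V} (h1 : H.Adj a b) (h2 : H.Adj b d) (h3 : H.Adj d e)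
    (had : a ≠ d) (hae : a ≠ e) (hbe : b ≠ e)
    (hc1 : c s(a, b) ≠ c s(b, d)) (hc2 : c s(a, b) ≠ c s(d, e))
    (hc3 : c s(b, d) ≠ c s(d, e)) :
    ∃ p : H.Walk a e, p.IsPath ∧ (p.edges.map c).Nodup :=
  ⟨Walk.cons h1 (Walk.cons h2 (Walk.cons h3 Walk.nil)),
    by simp [Walk.isPath_def, h1.ne, h2.ne, h3.ne, had, hae, hbe],
    by simp [hc1, hc2, hc3]⟩

end Walks

/-- G triangle-free connected with diameter 3 and connected complement,
then rc(complement) ≤ 5. -/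
theorem rc_compl_le_five_of_diam_three {V : Type*} [Fintype V] (G : SimpleGraph V)
    (hG : G.Connected) (htf : G.CliqueFree 3) (hd : G.diam = 3) (hc : Gᶜ.Connected) :
    rc Gᶜ ≤ 5 := by
  classical
  haveI : Nonempty V := hG.nonempty
  obtain ⟨x, y, hxy⟩ := G.exists_dist_eq_diam
  rw [hd] at hxy
  -- basic facts about x, y
  have hxny : x ≠ y := by
    rintro rfl; rw [SimpleGraph.dist_self] at hxy; omega
  have hnadj : ¬ G.Adj x y := fun h => by
    rw [(SimpleGraph.dist_eq_one_iff_adj).mpr h] at hxy; omega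
  -- neighbors of x are at distance ≥ 2 from y
  have hay : ∀ a, G.Adj x a → ¬ G.Adj a y := by
    intro a h1 h2
    have ht := hG.dist_triangle (u := x) (v := a) (w := y)
    rw [SimpleGraph.dist_eq_one_iff_adj.mpr h1, SimpleGraph.dist_eq_one_iff_adj.mpr h2,
      hxy] at ht
    omega
  have haney : ∀ a, G.Adj x a → a ≠ y := by
    rintro a h1 rfl
    rw [SimpleGraph.dist_eq_one_iff_adj.mpr h1] at hxy; omega
  have hbx : ∀ b, G.Adj y b → ¬ G.Adj b x := by
    intro b h1 h2
    have ht := hG.dist_triangle (u := x) (v := b) (w := y)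
    rw [SimpleGraph.dist_eq_one_iff_adj.mpr h2.symm,
      SimpleGraph.dist_eq_one_iff_adj.mpr h1.symm, hxy] at ht
    omega
  have hbnex : ∀ b, G.Adj y b → b ≠ x := by
    rintro b h1 rfl
    rw [SimpleGraph.dist_eq_one_iff_adj.mpr h1.symm] at hxy; omega
  have hAB : ∀ a, G.Adj x a → G.Adj y a → False := fun a h1 h2 => hbx a h2 h1.symm
  -- triangle-freeness: common neighbors are non-adjacent
  have htri : ∀ w a b : V, G.Adj w a → G.Adj w b → ¬ G.Adj a b := by
    intro w a b h1 h2 hab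
    exact htf {w, a, b} (SimpleGraph.is3Clique_triple_iff.mpr ⟨h1, h2, hab⟩)
  -- adjacency in the complement
  have mk : ∀ {a b : V}, a ≠ b → ¬ G.Adj a b → Gᶜ.Adj a b := fun h1 h2 =>
    (G.compl_adj _ _).mpr ⟨h1, h2⟩
  have axy : Gᶜ.Adj x y := mk hxny hnadj
  have hya : ∀ a, G.Adj x a → Gᶜ.Adj y a := fun a h =>
    mk (Ne.symm (haney a h)) (fun h2 => hay a h h2.symm)
  have hxb : ∀ b, G.Adj y b → Gᶜ.Adj x b := fun b h =>
    mk (Ne.symm (hbnex b h)) (fun h2 => hbx b h h2.symm)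
  set c := rcCol G x y with hcdef
  -- color computations
  have cxy : c s(x, y) = 4 := rcCol_xy G x y
  have cxB : ∀ z, G.Adj y z → c s(x, z) = 3 := by
    intro z h
    rw [hcdef, rcCol_x G (hbnex z h) h.ne' hnadj, if_pos h]
  have cxC : ∀ z, z ≠ x → z ≠ y → ¬ G.Adj y z → c s(x, z) = 0 := by
    intro z h1 h2 h3
    rw [hcdef, rcCol_x G h1 h2 hnadj, if_neg h3]
  have cyA : ∀ z, G.Adj x z → c s(y, z) = 2 := by
    intro z h
    rw [hcdef, rcCol_y G hxny h.ne' (haney z h) hnadj, if_pos h]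
  have cyC : ∀ z, z ≠ x → z ≠ y → ¬ G.Adj x z → c s(y, z) = 1 := by
    intro z h1 h2 h3
    rw [hcdef, rcCol_y G hxny h1 h2 hnadj, if_neg h3]
  have syx : s(y, x) = s(x, y) := Sym2.eq_swap
  -- the coloring rainbow-connects Gᶜ
  have hrc : RainbowConnected Gᶜ c := by
    intro u v
    by_cases huv : u = v
    · exact huv ▸ ⟨Walk.nil, Walk.IsPath.nil, by simp⟩
    by_cases hux : u = x
    · rw [hux]; rw [hux] at huv
      by_cases hvy : v = y
      · rw [hvy]; exact rw_one axy
      by_cases hvA : G.Adj x v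
      · -- x to A : x - y - v
        refine rw_two axy (hya v hvA) hvA.ne ?_
        rw [cxy, cyA v hvA]; omega
      · exact rw_one (mk huv hvA)
    by_cases huy : u = y
    · rw [huy]; rw [huy] at huv
      by_cases hvx : v = x
      · rw [hvx]; exact rw_one axy.symm
      by_cases hvA : G.Adj x v
      · exact rw_one (hya v hvA)
      by_cases hvB : G.Adj y v
      · -- y to B : y - x - v
        refine rw_two axy.symm (hxb v hvB) hvB.ne ?_
        rw [syx, cxy, cxB v hvB]; omega
      · exact rw_one (mk huv hvB)
    -- now u ≠ x, u ≠ y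
    by_cases huA : G.Adj x u
    · -- u ∈ A
      have suy : s(u, y) = s(y, u) := Sym2.eq_swap
      by_cases hvx : v = x
      · rw [hvx]
        refine rw_two (hya u huA).symm axy.symm hux ?_
        simp only [suy, cyA u huA, syx, cxy]; omega
      by_cases hvy : v = y
      · rw [hvy]; exact rw_one (hya u huA).symm
      by_cases hvA : G.Adj x v
      · exact rw_one (mk huv (htri x u v huA hvA))
      by_cases hvB : G.Adj y v
      · -- A to B : u - y - x - v
        have huvne : u ≠ v := fun h => hAB u huA (by rw [h]; exact hvB)
        refine rw_three (hya u huA).symm axy.symm (hxb v hvB) hux huvne hvB.ne ?_ ?_ ?_ <;>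
          simp only [suy, cyA u huA, syx, cxy, cxB v hvB] <;> omega
      · -- A to C : u - y - v
        refine rw_two (hya u huA).symm (mk (Ne.symm hvy) hvB) huv ?_
        simp only [suy, cyA u huA, cyC v hvx hvy hvA]; omega
    by_cases huB : G.Adj y u
    · -- u ∈ B
      have sux : s(u, x) = s(x, u) := Sym2.eq_swap
      by_cases hvx : v = x
      · rw [hvx]; exact rw_one (hxb u huB).symm
      by_cases hvy : v = y
      · rw [hvy]
        refine rw_two (hxb u huB).symm axy huy ?_
        simp only [sux, cxB u huB, cxy]; omega
      by_cases hvA : G.Adj x v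
      · -- B to A : u - x - y - v
        have huvne : u ≠ v := fun h => hAB v hvA (by rw [← h]; exact huB)
        refine rw_three (hxb u huB).symm axy (hya v hvA) huy huvne hvA.ne ?_ ?_ ?_ <;>
          simp only [sux, cxB u huB, cxy, cyA v hvA] <;> omega
      by_cases hvB : G.Adj y v
      · exact rw_one (mk huv (htri y u v huB hvB))
      · -- B to C : u - x - v
        refine rw_two (hxb u huB).symm (mk (Ne.symm hvx) hvA) huv ?_
        simp only [sux, cxB u huB, cxC v hvx hvy hvB]; omega
    · -- u ∈ C
      have sux : s(u, x) = s(x, u) := Sym2.eq_swap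
      have suy : s(u, y) = s(y, u) := Sym2.eq_swap
      have hcux : Gᶜ.Adj u x := mk hux (fun h => huA h.symm)
      have hcuy : Gᶜ.Adj u y := mk huy (fun h => huB h.symm)
      have hunA : ¬ G.Adj x u := fun h => huA h
      have hunB : ¬ G.Adj y u := fun h => huB h
      by_cases hvx : v = x
      · rw [hvx]; exact rw_one hcux
      by_cases hvy : v = y
      · rw [hvy]; exact rw_one hcuy
      by_cases hvA : G.Adj x v
      · -- C to A : u - y - v
        refine rw_two hcuy (hya v hvA) huv ?_
        simp only [suy, cyC u hux huy hunA, cyA v hvA]; omega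
      by_cases hvB : G.Adj y v
      · -- C to B : u - x - v
        refine rw_two hcux (hxb v hvB) huv ?_
        simp only [sux, cxC u hux huy hunB, cxB v hvB]; omega
      · -- C to C : u - x - y - v
        refine rw_three hcux axy (mk (Ne.symm hvy) hvB) huy huv (Ne.symm hvx) ?_ ?_ ?_ <;>
          simp only [sux, cxC u hux huy hunB, cxy, cyC v hvx hvy hvA] <;> omega
  refine Nat.sInf_le ⟨c, fun e _ => rcCol_lt G x y e, hrc⟩
end

section
/- Let G be a connected graph whose complement is triangle-free. Then rc(G) ≤ 6. -/
open SimpleGraph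

section Aux

variable {V : Type*}

/- Generic rainbow path builders. -/

lemma rainbow1 {G : SimpleGraph V} (c : Sym2 V → ℕ) {x y : V} (h : G.Adj x y) :
    ∃ p : G.Walk x y, p.IsPath ∧ (p.edges.map c).Nodup :=
  ⟨.cons h .nil, by simp [h.ne], by simp⟩

lemma rainbow2 {G : SimpleGraph V} (c : Sym2 V → ℕ) {x w y : V}
    (h1 : G.Adj x w) (h2 : G.Adj w y) (hxy : x ≠ y)
    (hc : c s(x,w) ≠ c s(w,y)) :
    ∃ p : G.Walk x y, p.IsPath ∧ (p.edges.map c).Nodup :=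
  ⟨.cons h1 (.cons h2 .nil), by simp [h1.ne, h2.ne, hxy], by simp [hc]⟩

lemma rainbow3 {G : SimpleGraph V} (c : Sym2 V → ℕ) {x w1 w2 y : V}
    (h1 : G.Adj x w1) (h2 : G.Adj w1 w2) (h3 : G.Adj w2 y)
    (n1 : x ≠ w2) (n2 : x ≠ y) (n3 : w1 ≠ y)
    (c1 : c s(x,w1) ≠ c s(w1,w2)) (c2 : c s(x,w1) ≠ c s(w2,y)) (c3 : c s(w1,w2) ≠ c s(w2,y)) :
    ∃ p : G.Walk x y, p.IsPath ∧ (p.edges.map c).Nodup :=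
  ⟨.cons h1 (.cons h2 (.cons h3 .nil)),
    by simp [h1.ne, h2.ne, h3.ne, n1, n2, n3], by simp [c1, c2, c3]⟩

lemma rainbow4 {G : SimpleGraph V} (c : Sym2 V → ℕ) {x w1 w2 w3 y : V}
    (h1 : G.Adj x w1) (h2 : G.Adj w1 w2) (h3 : G.Adj w2 w3) (h4 : G.Adj w3 y)
    (n1 : x ≠ w2) (n2 : x ≠ w3) (n3 : x ≠ y) (n4 : w1 ≠ w3) (n5 : w1 ≠ y) (n6 : w2 ≠ y)
    (c1 : c s(x,w1) ≠ c s(w1,w2)) (c2 : c s(x,w1) ≠ c s(w2,w3)) (c3 : c s(x,w1) ≠ c s(w3,y))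
    (c4 : c s(w1,w2) ≠ c s(w2,w3)) (c5 : c s(w1,w2) ≠ c s(w3,y)) (c6 : c s(w2,w3) ≠ c s(w3,y)) :
    ∃ p : G.Walk x y, p.IsPath ∧ (p.edges.map c).Nodup :=
  ⟨.cons h1 (.cons h2 (.cons h3 (.cons h4 .nil))),
    by simp [h1.ne, h2.ne, h3.ne, h4.ne, n1, n2, n3, n4, n5, n6],
    by simp [c1, c2, c3, c4, c5, c6]⟩

lemma flipRainbow {G : SimpleGraph V} (c : Sym2 V → ℕ) {x y : V}
    (h : ∃ p : G.Walk y x, p.IsPath ∧ (p.edges.map c).Nodup) :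
    ∃ p : G.Walk x y, p.IsPath ∧ (p.edges.map c).Nodup := by
  obtain ⟨p, hp, hn⟩ := h
  exact ⟨p.reverse, hp.reverse, by
    rw [Walk.edges_reverse, List.map_reverse]; exact List.nodup_reverse.2 hn⟩

lemma crossingLemma {G : SimpleGraph V} {S : V → Prop} :
    ∀ {x y : V}, G.Walk x y → S x → ¬ S y → ∃ a b, S a ∧ ¬ S b ∧ G.Adj a b := by
  intro x y p
  induction p with
  | nil => intro h h'; exact absurd h h'
  | @cons x w y h q ih =>
    intro hx hy
    by_cases h2 : S w
    · exact ih h2 hy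
    · exact ⟨x, w, hx, h2, h⟩

/- The three-part classification relative to a nonadjacent pair `u, v`. -/

def InA (G : SimpleGraph V) (u v x : V) : Prop := G.Adj u x ∧ ¬ G.Adj v x
def InB (G : SimpleGraph V) (u v x : V) : Prop := G.Adj v x ∧ ¬ G.Adj u x
def InC (G : SimpleGraph V) (u v x : V) : Prop := G.Adj u x ∧ G.Adj v x

open scoped Classical in
noncomputable def col (G : SimpleGraph V) (u v : V) (e : Sym2 V) : ℕ :=
  if u ∈ e then (if ∃ a ∈ e, InA G u v a then 0 else 1)
  else if v ∈ e then (if ∃ b ∈ e, InB G u v b then 2 else 3)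
  else if ∀ a ∈ e, InA G u v a then 4
  else if ∀ b ∈ e, InB G u v b then 1
  else 5

lemma col_lt (G : SimpleGraph V) (u v : V) (e : Sym2 V) : col G u v e < 6 := by
  unfold col; split_ifs <;> omega

section ColEval

variable {G : SimpleGraph V} {u v : V}

lemma col_uA {a : V} (ha : InA G u v a) : col G u v s(u,a) = 0 := by
  simp [col, ha]

lemma col_uC {c : V} (hc : InC G u v c) : col G u v s(u,c) = 1 := by
  have h1 : ¬ InA G u v c := fun h => h.2 hc.2
  have h2 : ¬ InA G u v u := fun h => G.irrefl h.1
  simp [col, h1, h2]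

lemma col_vB (hne : u ≠ v) (huv : ¬ G.Adj u v) {b : V} (hb : InB G u v b) :
    col G u v s(v,b) = 2 := by
  have h2 : u ≠ b := by rintro rfl; exact huv (G.adj_symm hb.1)
  simp [col, Sym2.mem_iff, hne, h2, hb]

lemma col_vC (hne : u ≠ v) {c : V} (hc : InC G u v c) : col G u v s(v,c) = 3 := by
  have h2 : u ≠ c := by rintro rfl; exact G.irrefl hc.1
  have h3 : ¬ InB G u v v := fun h => G.irrefl h.1
  have h4 : ¬ InB G u v c := fun h => h.2 hc.1
  simp [col, Sym2.mem_iff, hne, h2, h3, h4]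

lemma col_AA (huv : ¬ G.Adj u v) {a a' : V} (ha : InA G u v a) (ha' : InA G u v a') :
    col G u v s(a,a') = 4 := by
  have n1 : u ≠ a := by rintro rfl; exact G.irrefl ha.1
  have n2 : u ≠ a' := by rintro rfl; exact G.irrefl ha'.1
  have n3 : v ≠ a := by rintro rfl; exact huv ha.1
  have n4 : v ≠ a' := by rintro rfl; exact huv ha'.1
  simp [col, Sym2.mem_iff, n1, n2, n3, n4, ha, ha']

lemma col_BB (huv : ¬ G.Adj u v) {b b' : V} (hb : InB G u v b) (hb' : InB G u v b') :
    col G u v s(b,b') = 1 := by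
  have n1 : u ≠ b := by rintro rfl; exact huv (G.adj_symm hb.1)
  have n2 : u ≠ b' := by rintro rfl; exact huv (G.adj_symm hb'.1)
  have n3 : v ≠ b := by rintro rfl; exact G.irrefl hb.1
  have n4 : v ≠ b' := by rintro rfl; exact G.irrefl hb'.1
  have m1 : ¬ InA G u v b := fun h => hb.2 h.1
  simp [col, Sym2.mem_iff, n1, n2, n3, n4, m1, hb, hb']

lemma col_AB (huv : ¬ G.Adj u v) {a b : V} (ha : InA G u v a) (hb : InB G u v b) :
    col G u v s(a,b) = 5 := by
  have n1 : u ≠ a := by rintro rfl; exact G.irrefl ha.1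
  have n2 : u ≠ b := by rintro rfl; exact huv (G.adj_symm hb.1)
  have n3 : v ≠ a := by rintro rfl; exact huv ha.1
  have n4 : v ≠ b := by rintro rfl; exact G.irrefl hb.1
  have m1 : ¬ InA G u v b := fun h => hb.2 h.1
  have m2 : ¬ InB G u v a := fun h => h.2 ha.1
  simp [col, Sym2.mem_iff, n1, n2, n3, n4, m1, m2]

lemma col_AC (huv : ¬ G.Adj u v) {a c : V} (ha : InA G u v a) (hc : InC G u v c) :
    col G u v s(a,c) = 5 := by
  have n1 : u ≠ a := by rintro rfl; exact G.irrefl ha.1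
  have n2 : u ≠ c := by rintro rfl; exact G.irrefl hc.1
  have n3 : v ≠ a := by rintro rfl; exact huv ha.1
  have n4 : v ≠ c := by rintro rfl; exact G.irrefl hc.2
  have m1 : ¬ InA G u v c := fun h => h.2 hc.2
  have m2 : ¬ InB G u v a := fun h => h.2 ha.1
  simp [col, Sym2.mem_iff, n1, n2, n3, n4, m1, m2]

lemma col_BC (huv : ¬ G.Adj u v) {b c : V} (hb : InB G u v b) (hc : InC G u v c) :
    col G u v s(b,c) = 5 := by
  have n1 : u ≠ b := by rintro rfl; exact huv (G.adj_symm hb.1)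
  have n2 : u ≠ c := by rintro rfl; exact G.irrefl hc.1
  have n3 : v ≠ b := by rintro rfl; exact G.irrefl hb.1
  have n4 : v ≠ c := by rintro rfl; exact G.irrefl hc.2
  have m1 : ¬ InA G u v b := fun h => hb.2 h.1
  have m2 : ¬ InB G u v c := fun h => h.2 hc.1
  simp [col, Sym2.mem_iff, n1, n2, n3, n4, m1, m2]

end ColEval

end Aux

lemma mainCase {V : Type*} (G : SimpleGraph V) (hG : G.Connected)
    (key : ∀ ⦃x y z : V⦄, x ≠ y → x ≠ z → y ≠ z → ¬G.Adj x y → ¬G.Adj x z → G.Adj y z)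
    (u v w : V) (hne : u ≠ v) (huv : ¬ G.Adj u v)
    (hwu : w ≠ u) (hwv : w ≠ v) (hvw : ¬ G.Adj v w) :
    ∃ c : Sym2 V → ℕ, (∀ e, c e < 6) ∧ RainbowConnected G c := by
  classical
  have hvu : ¬ G.Adj v u := fun h => huv (G.adj_symm h)
  have hwA : InA G u v w := ⟨key hne.symm hwv.symm hwu.symm hvu hvw, hvw⟩
  have hK1 : ∀ x, x ≠ u → x ≠ v → G.Adj u x ∨ G.Adj v x := by
    intro x hxu hxv
    by_contra hcon
    push_neg at hcon
    exact huv (key hxu hxv hne (fun h => hcon.1 h.symm) (fun h => hcon.2 h.symm))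
  have hclass : ∀ x, x = u ∨ x = v ∨ InA G u v x ∨ InB G u v x ∨ InC G u v x := by
    intro x
    by_cases h1 : x = u
    · exact Or.inl h1
    by_cases h2 : x = v
    · exact Or.inr (Or.inl h2)
    refine Or.inr (Or.inr ?_)
    rcases hK1 x h1 h2 with h | h
    · by_cases h3 : G.Adj v x
      · exact Or.inr (Or.inr ⟨h, h3⟩)
      · exact Or.inl ⟨h, h3⟩
    · by_cases h3 : G.Adj u x
      · exact Or.inr (Or.inr ⟨h3, h⟩)
      · exact Or.inr (Or.inl ⟨h, h3⟩)
  have cliqueA : ∀ a a', InA G u v a → InA G u v a' → a ≠ a' → G.Adj a a' := by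
    intro a a' ha ha' hne'
    have n1 : v ≠ a := by rintro rfl; exact huv ha.1
    have n2 : v ≠ a' := by rintro rfl; exact huv ha'.1
    exact key n1 n2 hne' ha.2 ha'.2
  have cliqueB : ∀ b b', InB G u v b → InB G u v b' → b ≠ b' → G.Adj b b' := by
    intro b b' hb hb' hne'
    have n1 : u ≠ b := by rintro rfl; exact huv (G.adj_symm hb.1)
    have n2 : u ≠ b' := by rintro rfl; exact huv (G.adj_symm hb'.1)
    exact key n1 n2 hne' hb.2 hb'.2
  have crossAB : (∀ x, ¬ InC G u v x) → ∃ a b, InA G u v a ∧ InB G u v b ∧ G.Adj a b := by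
    intro hC
    obtain ⟨p⟩ := hG.preconnected u v
    have hSu : (u = u ∨ InA G u v u) := Or.inl rfl
    have hSv : ¬ (v = u ∨ InA G u v v) := by
      rintro (h | h)
      · exact hne h.symm
      · exact huv h.1
    obtain ⟨a, b, hSa, hSb, hab⟩ :=
      crossingLemma (S := fun x => x = u ∨ InA G u v x) p hSu hSv
    push_neg at hSb
    rcases hSa with rfl | hA
    · have hbv : b ≠ v := by rintro rfl; exact huv hab
      by_cases h3 : G.Adj v b
      · exact absurd ⟨hab, h3⟩ (hC b)
      · exact absurd ⟨hab, h3⟩ hSb.2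
    · have hbu : b ≠ u := hSb.1
      have hbv : b ≠ v := by rintro rfl; exact hA.2 (G.adj_symm hab)
      rcases hK1 b hbu hbv with h | h
      · by_cases h3 : G.Adj v b
        · exact absurd ⟨h, h3⟩ (hC b)
        · exact absurd ⟨h, h3⟩ hSb.2
      · by_cases h3 : G.Adj u b
        · exact absurd ⟨h3, h⟩ (hC b)
        · exact ⟨a, b, hA, ⟨h, h3⟩, hab⟩
  refine ⟨col G u v, col_lt G u v, ?_⟩
  have sw : ∀ x y : V, col G u v s(x,y) = col G u v s(y,x) := fun x y =>
    congrArg _ (Sym2.eq_swap)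
  -- core: u to v
  have core_uv : ∃ p : G.Walk u v, p.IsPath ∧ (p.edges.map (col G u v)).Nodup := by
    by_cases hC : ∃ x, InC G u v x
    · obtain ⟨x0, hx0⟩ := hC
      refine rainbow2 _ hx0.1 (G.adj_symm hx0.2) hne ?_
      rw [col_uC hx0, sw, col_vC hne hx0]; omega
    · push_neg at hC
      obtain ⟨a, b, ha, hb, hab⟩ := crossAB hC
      have n1 : u ≠ b := by rintro rfl; exact huv (G.adj_symm hb.1)
      have n3 : a ≠ v := by rintro rfl; exact huv ha.1
      refine rainbow3 _ ha.1 hab (G.adj_symm hb.1) n1 hne n3 ?_ ?_ ?_ <;>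
        simp only [col_uA ha, col_AB huv ha hb, sw b v, col_vB hne huv hb] <;> omega
  -- core: u to b ∈ B
  have core_ub : ∀ b, InB G u v b →
      ∃ p : G.Walk u b, p.IsPath ∧ (p.edges.map (col G u v)).Nodup := by
    intro b hb
    have hub : u ≠ b := by rintro rfl; exact huv (G.adj_symm hb.1)
    by_cases hA1 : ∃ a, InA G u v a ∧ G.Adj a b
    · obtain ⟨a, ha, hab⟩ := hA1
      refine rainbow2 _ ha.1 hab hub ?_
      rw [col_uA ha, col_AB huv ha hb]; omega
    by_cases hC1 : ∃ x, InC G u v x ∧ G.Adj x b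
    · obtain ⟨x0, hx0, hxb⟩ := hC1
      refine rainbow2 _ hx0.1 hxb hub ?_
      rw [col_uC hx0, sw x0 b, col_BC huv hb hx0]; omega
    by_cases hC : ∃ x, InC G u v x
    · obtain ⟨x0, hx0⟩ := hC
      have n3 : x0 ≠ b := by rintro rfl; exact hb.2 hx0.1
      refine rainbow3 _ hx0.1 (G.adj_symm hx0.2) hb.1 hne hub n3 ?_ ?_ ?_ <;>
        simp only [col_uC hx0, sw x0 v, col_vC hne hx0, col_vB hne huv hb] <;> omega
    · push_neg at hC
      obtain ⟨a', b', ha', hb', hab'⟩ := crossAB hC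
      have hbb : b' ≠ b := by rintro rfl; exact hA1 ⟨a', ha', hab'⟩
      have hub' : u ≠ b' := by rintro rfl; exact huv (G.adj_symm hb'.1)
      have hadjbb : G.Adj b' b := cliqueB b' b hb' hb hbb
      have n3 : a' ≠ b := by rintro rfl; exact hb.2 ha'.1
      refine rainbow3 _ ha'.1 hab' hadjbb hub' hub n3 ?_ ?_ ?_ <;>
        simp only [col_uA ha', col_AB huv ha' hb', col_BB huv hb' hb] <;> omega
  -- core: v to a ∈ A
  have core_va : ∀ a, InA G u v a →
      ∃ p : G.Walk v a, p.IsPath ∧ (p.edges.map (col G u v)).Nodup := by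
    intro a ha
    have hva : v ≠ a := by rintro rfl; exact huv ha.1
    by_cases hB1 : ∃ b, InB G u v b ∧ G.Adj b a
    · obtain ⟨b, hb, hba⟩ := hB1
      refine rainbow2 _ hb.1 hba hva ?_
      rw [col_vB hne huv hb, sw b a, col_AB huv ha hb]; omega
    by_cases hC1 : ∃ x, InC G u v x ∧ G.Adj x a
    · obtain ⟨x0, hx0, hxa⟩ := hC1
      refine rainbow2 _ hx0.2 hxa hva ?_
      rw [col_vC hne hx0, sw x0 a, col_AC huv ha hx0]; omega
    by_cases hC : ∃ x, InC G u v x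
    · obtain ⟨x0, hx0⟩ := hC
      have n3 : x0 ≠ a := by rintro rfl; exact ha.2 hx0.2
      refine rainbow3 _ hx0.2 (G.adj_symm hx0.1) ha.1 hne.symm hva n3 ?_ ?_ ?_ <;>
        simp only [col_vC hne hx0, sw x0 u, col_uC hx0, col_uA ha] <;> omega
    · push_neg at hC
      obtain ⟨a', b', ha', hb', hab'⟩ := crossAB hC
      have haa : a' ≠ a := by rintro rfl; exact hB1 ⟨b', hb', G.adj_symm hab'⟩
      have hva' : v ≠ a' := by rintro rfl; exact huv ha'.1
      have hadjaa : G.Adj a' a := cliqueA a' a ha' ha haa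
      have n3 : b' ≠ a := by rintro rfl; exact hb'.2 ha.1
      refine rainbow3 _ hb'.1 (G.adj_symm hab') hadjaa hva' hva n3 ?_ ?_ ?_ <;>
        simp only [col_vB hne huv hb', sw b' a', col_AB huv ha' hb', col_AA huv ha' ha] <;> omega
  -- core: a ∈ A to b ∈ B, nonadjacent
  have core_ab : ∀ a b, InA G u v a → InB G u v b → ¬ G.Adj a b →
      ∃ p : G.Walk a b, p.IsPath ∧ (p.edges.map (col G u v)).Nodup := by
    intro a b ha hb hnadj
    have hab : a ≠ b := by rintro rfl; exact hb.2 ha.1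
    by_cases hA1 : ∃ a', InA G u v a' ∧ G.Adj a' b
    · obtain ⟨a', ha', hab'⟩ := hA1
      have haa : a ≠ a' := by rintro rfl; exact hnadj hab'
      refine rainbow2 _ (cliqueA a a' ha ha' haa) hab' hab ?_
      rw [col_AA huv ha ha', col_AB huv ha' hb]; omega
    by_cases hB1 : ∃ b', InB G u v b' ∧ G.Adj b' a
    · obtain ⟨b', hb', hba'⟩ := hB1
      have hbb : b' ≠ b := by rintro rfl; exact hnadj (G.adj_symm hba')
      refine rainbow2 _ (G.adj_symm hba') (cliqueB b' b hb' hb hbb) hab ?_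
      rw [col_AB huv ha hb', col_BB huv hb' hb]; omega
    by_cases hC : ∃ x, InC G u v x
    · obtain ⟨x0, hx0⟩ := hC
      have n1 : a ≠ x0 := by rintro rfl; exact ha.2 hx0.2
      have n2 : a ≠ v := by rintro rfl; exact huv ha.1
      have n5 : u ≠ b := by rintro rfl; exact huv (G.adj_symm hb.1)
      have n6 : x0 ≠ b := by rintro rfl; exact hb.2 hx0.1
      refine rainbow4 _ (G.adj_symm ha.1) hx0.1 (G.adj_symm hx0.2) hb.1
        n1 n2 hab hne n5 n6 ?_ ?_ ?_ ?_ ?_ ?_ <;>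
        simp only [sw a u, col_uA ha, col_uC hx0, sw x0 v, col_vC hne hx0, col_vB hne huv hb] <;> omega
    · push_neg at hC
      obtain ⟨a', b', ha', hb', hab'⟩ := crossAB hC
      have haa : a' ≠ a := by rintro rfl; exact hB1 ⟨b', hb', G.adj_symm hab'⟩
      have hbb : b' ≠ b := by rintro rfl; exact hA1 ⟨a', ha', hab'⟩
      have n1 : a ≠ b' := by rintro rfl; exact ha.2 hb'.1
      have n3 : a' ≠ b := by rintro rfl; exact hb.2 ha'.1
      refine rainbow3 _ (cliqueA a a' ha ha' (Ne.symm haa)) hab'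
        (cliqueB b' b hb' hb hbb) n1 hab n3 ?_ ?_ ?_ <;>
        simp only [col_AA huv ha ha', col_AB huv ha' hb', col_BB huv hb' hb] <;> omega
  -- core: a ∈ A to x ∈ C, nonadjacent
  have core_ac : ∀ a x, InA G u v a → InC G u v x → ¬ G.Adj a x →
      ∃ p : G.Walk a x, p.IsPath ∧ (p.edges.map (col G u v)).Nodup := by
    intro a x ha hx _
    have hax : a ≠ x := by rintro rfl; exact ha.2 hx.2
    refine rainbow2 _ (G.adj_symm ha.1) hx.1 hax ?_
    rw [sw a u, col_uA ha, col_uC hx]; omega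
  -- core: b ∈ B to x ∈ C, nonadjacent
  have core_bc : ∀ b x, InB G u v b → InC G u v x → ¬ G.Adj b x →
      ∃ p : G.Walk b x, p.IsPath ∧ (p.edges.map (col G u v)).Nodup := by
    intro b x hb hx _
    have hbx : b ≠ x := by rintro rfl; exact hb.2 hx.1
    refine rainbow2 _ (G.adj_symm hb.1) hx.2 hbx ?_
    rw [sw b v, col_vB hne huv hb, col_vC hne hx]; omega
  -- core: two vertices of C, nonadjacent
  have core_cc : ∀ x y, InC G u v x → InC G u v y → x ≠ y → ¬ G.Adj x y →
      ∃ p : G.Walk x y, p.IsPath ∧ (p.edges.map (col G u v)).Nodup := by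
    intro x y hx hy hxy hnadj
    have hxw : x ≠ w := by rintro rfl; exact hwA.2 hx.2
    have hyw : w ≠ y := by rintro rfl; exact hwA.2 hy.2
    by_cases h1 : G.Adj x w
    · have n1 : x ≠ u := by rintro rfl; exact G.irrefl hx.1
      refine rainbow3 _ h1 (G.adj_symm hwA.1) hy.1 n1 hxy hyw ?_ ?_ ?_ <;>
        simp only [sw x w, col_AC huv hwA hx, sw w u, col_uA hwA, col_uC hy] <;> omega
    · have h2 : G.Adj w y := key hxw hxy hyw h1 hnadj
      have n3 : u ≠ y := by rintro rfl; exact G.irrefl hy.1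
      refine rainbow3 _ (G.adj_symm hx.1) hwA.1 h2 hxw hxy n3 ?_ ?_ ?_ <;>
        simp only [sw x u, col_uC hx, col_uA hwA, col_AC huv hwA hy] <;> omega
  -- dispatch
  intro x y
  by_cases hxy : x = y
  · subst hxy; exact ⟨.nil, Walk.IsPath.nil, by simp⟩
  by_cases hadj : G.Adj x y
  · exact rainbow1 _ hadj
  rcases hclass x with rfl | rfl | hxA | hxB | hxC <;>
    rcases hclass y with rfl | rfl | hyA | hyB | hyC
  · exact absurd rfl hxy
  · exact core_uv
  · exact absurd hyA.1 hadj
  · exact core_ub y hyB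
  · exact absurd hyC.1 hadj
  · exact flipRainbow _ core_uv
  · exact absurd rfl hxy
  · exact core_va y hyA
  · exact absurd hyB.1 hadj
  · exact absurd hyC.2 hadj
  · exact absurd hxA.1.symm hadj
  · exact flipRainbow _ (core_va x hxA)
  · exact absurd (cliqueA x y hxA hyA hxy) hadj
  · exact core_ab x y hxA hyB hadj
  · exact core_ac x y hxA hyC hadj
  · exact flipRainbow _ (core_ub x hxB)
  · exact absurd hxB.1.symm hadj
  · exact flipRainbow _ (core_ab y x hyA hxB (fun h => hadj (G.adj_symm h)))
  · exact absurd (cliqueB x y hxB hyB hxy) hadj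
  · exact core_bc x y hxB hyC hadj
  · exact absurd hxC.1.symm hadj
  · exact absurd hxC.2.symm hadj
  · exact flipRainbow _ (core_ac y x hyA hxC (fun h => hadj (G.adj_symm h)))
  · exact flipRainbow _ (core_bc y x hyB hxC (fun h => hadj (G.adj_symm h)))
  · exact core_cc x y hxC hyC hxy hadj
lemma matchingCase {V : Type*} [Fintype V] (G : SimpleGraph V) (hG : G.Connected)
    (hP : ∀ ⦃x y z : V⦄, x ≠ y → ¬G.Adj x y → z ≠ x → z ≠ y → G.Adj x z ∧ G.Adj y z) :
    ∃ c : Sym2 V → ℕ, (∀ e, c e < 6) ∧ RainbowConnected G c := by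
  classical
  let e := Fintype.equivFin V
  let side : V → Bool := fun x =>
    if h : ∃ z, z ≠ x ∧ ¬ G.Adj x z then decide (e x < e h.choose) else true
  have hside : ∀ x y, x ≠ y → ¬ G.Adj x y → side x ≠ side y := by
    intro x y hxy hnadj
    have hx : ∃ z, z ≠ x ∧ ¬ G.Adj x z := ⟨y, Ne.symm hxy, hnadj⟩
    have hy : ∃ z, z ≠ y ∧ ¬ G.Adj y z := ⟨x, hxy, fun h => hnadj (G.adj_symm h)⟩
    have hcx : hx.choose = y := by
      by_contra hcon
      have hs := hx.choose_spec
      exact hnadj (hP (Ne.symm hs.1) hs.2 (Ne.symm hxy) (fun h => hcon h.symm)).1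
    have hcy : hy.choose = x := by
      by_contra hcon
      have hs := hy.choose_spec
      exact hnadj (G.adj_symm (hP (Ne.symm hs.1) hs.2 hxy (fun h => hcon h.symm)).1)
    have sx : side x = decide (e x < e y) := by
      show (if h : _ then _ else _) = _
      rw [dif_pos hx, hcx]
    have sy : side y = decide (e y < e x) := by
      show (if h : _ then _ else _) = _
      rw [dif_pos hy, hcy]
    rcases lt_trichotomy (e x) (e y) with h | h | h
    · rw [sx, sy]; simp [h, asymm h]
    · exact absurd (e.injective h) hxy
    · rw [sx, sy]; simp [h, asymm h]
  let f : V → V → ℕ := fun a b => if side a = side b then 0 else 1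
  have hf : ∀ a b, f a b = f b a := by
    intro a b
    show (if side a = side b then 0 else 1) = (if side b = side a then 0 else 1)
    by_cases h : side a = side b
    · rw [if_pos h, if_pos h.symm]
    · rw [if_neg h, if_neg (fun hh => h hh.symm)]
  refine ⟨Sym2.lift ⟨f, hf⟩, ?_, ?_⟩
  · intro e'
    induction e' using Sym2.ind with
    | _ x y =>
      show (if side x = side y then 0 else 1) < 6
      split_ifs <;> omega
  intro x y
  by_cases hxy : x = y
  · subst hxy; exact ⟨.nil, Walk.IsPath.nil, by simp⟩
  by_cases hadj : G.Adj x y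
  · exact rainbow1 _ hadj
  obtain ⟨p⟩ := hG.preconnected x y
  cases p with
  | nil => exact absurd rfl hxy
  | @cons _ w _ h q =>
    have hwy : w ≠ y := by rintro rfl; exact hadj h
    have hyw : G.Adj y w := (hP hxy hadj h.ne' hwy).2
    refine rainbow2 _ h (G.adj_symm hyw) hxy ?_
    have hsxy := hside x y hxy hadj
    show (if side x = side w then 0 else 1) ≠ (if side w = side y then 0 else 1)
    by_cases h1 : side x = side w
    · rw [if_pos h1, if_neg (fun h2 => hsxy (h1.trans h2))]; omega
    · have h2 : side w = side y := by
        cases hb1 : side x <;> cases hb2 : side w <;> cases hb3 : side y <;> simp_all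
      rw [if_neg h1, if_pos h2]; omega

/-- G connected with triangle-free complement, then rc(G) ≤ 6. -/
theorem rc_le_six_of_compl_triangleFree {V : Type*} [Fintype V] (G : SimpleGraph V)
    (hG : G.Connected) (htf : Gᶜ.CliqueFree 3) :
    rc G ≤ 6 := by
  classical
  have key : ∀ ⦃x y z : V⦄, x ≠ y → x ≠ z → y ≠ z → ¬G.Adj x y → ¬G.Adj x z → G.Adj y z := by
    intro x y z hxy hxz hyz h1 h2
    by_contra h3
    exact htf {x,y,z} (is3Clique_triple_iff.2
      ⟨compl_adj .. |>.2 ⟨hxy, h1⟩, compl_adj .. |>.2 ⟨hxz, h2⟩, compl_adj .. |>.2 ⟨hyz, h3⟩⟩)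
  have hex : ∃ cc : Sym2 V → ℕ, (∀ e, cc e < 6) ∧ RainbowConnected G cc := by
    by_cases hP : ∃ u v w : V, u ≠ v ∧ ¬G.Adj u v ∧ w ≠ u ∧ w ≠ v ∧ ¬ G.Adj v w
    · obtain ⟨u, v, w, h1, h2, h3, h4, h5⟩ := hP
      exact mainCase G hG key u v w h1 h2 h3 h4 h5
    · apply matchingCase G hG
      intro x y z hxy hnadj hzx hzy
      push_neg at hP
      exact ⟨hP y x z (Ne.symm hxy) (fun h => hnadj (G.adj_symm h)) hzy hzx,
        hP x y z hxy hnadj hzx hzy⟩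
  obtain ⟨cc, h1, h2⟩ := hex
  have hmem : (6:ℕ) ∈ {n | ∃ c : Sym2 V → ℕ,
      (∀ e ∈ G.edgeSet, c e < n) ∧ RainbowConnected G c} := ⟨cc, fun e _ => h1 e, h2⟩
  exact Nat.sInf_le hmem
end
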